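/- Assume hypothesis (H) and fix λ > 0, μ > 0 with λα + μγ > 0 and λβ + μδ > 0. Let (x(·), y(·)) be a solution to the system starting at (x₀,y₀) ∈ S°. Then for all t > 0: x(t) ≥ min( x₀ , c(λx₀ + μy₀)/(λc + μd) ) and y(t) ≥ min( y₀ , d(λx₀ + μy₀)/(λc + μd) ). -/

import Mathlib

open MeasureTheory

/-- A solution to the system starting at `(x₀, y₀)`: a pair of continuous functions
`x, y : [0,∞) → [0,∞)` (modelled as functions `ℝ → ℝ` that are continuous and
nonnegative on `[0,∞)`) with `x 0 = x₀`, `y 0 = y₀`, such that for all `t ≥ 0`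
the sets `{s ∈ [0,t] | x s = 0}` and `{s ∈ [0,t] | y s = 0}` are Lebesgue-null, the
integrals `∫₀ᵗ ds / x s` and `∫₀ᵗ ds / y s` are finite (note `1 / 0 = 0` in Lean, so
`1 / x s` is the same as `1_{x(s) > 0} / x s`), and the two integral equations hold. -/
def IsSolution (α β γ δ x₀ y₀ : ℝ) (x y : ℝ → ℝ) : Prop :=
  ContinuousOn x (Set.Ici 0) ∧ ContinuousOn y (Set.Ici 0) ∧
  (∀ t ≥ (0:ℝ), 0 ≤ x t ∧ 0 ≤ y t) ∧
  x 0 = x₀ ∧ y 0 = y₀ ∧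
  ∀ t ≥ (0:ℝ),
    volume {s ∈ Set.Icc (0:ℝ) t | x s = 0} = 0 ∧
    volume {s ∈ Set.Icc (0:ℝ) t | y s = 0} = 0 ∧
    IntervalIntegrable (fun s => 1 / x s) volume 0 t ∧
    IntervalIntegrable (fun s => 1 / y s) volume 0 t ∧
    x t = x₀ + α * (∫ s in (0:ℝ)..t, 1 / x s) + β * (∫ s in (0:ℝ)..t, 1 / y s) ∧
    y t = y₀ + γ * (∫ s in (0:ℝ)..t, 1 / x s) + δ * (∫ s in (0:ℝ)..t, 1 / y s)

/-!
Put `z = λx + μy`. Since `λα + μγ` and `λβ + μδ` are nonnegative, `z` never drops below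
`z₀ = λx₀ + μy₀`. While `x < c z₀ / (λc + μd)`, this forces `y > d z₀ / (λc + μd)`, and then
`dx/dt = α/x + β/y = (αy + βx)/(xy) ≥ 0` because `αd + βc ≥ 0`. So `x` cannot cross the level
`min x₀ (c z₀ / (λc + μd))` downwards. The bound for `y` is the same statement for the system
with the roles of the two coordinates exchanged. The inequality `αd + βc ≥ 0` comes from the
identity `2αd = (γ - β + θ) c`, `θ = √((β - γ)² + 4αδ)`, which gives
`2(αd + βc) = (β + γ + θ) c`, and (H) makes `β + γ + θ` positive.
-/

open Set

lemma le_of_eq_add_integral_of_nonneg_below {x g : ℝ → ℝ} {a b M : ℝ} (hab : a ≤ b)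
    (hx : ContinuousOn x (Icc a b)) (hg : IntervalIntegrable g volume a b)
    (heq : ∀ s ∈ Icc a b, x s = x a + ∫ u in a..s, g u) (hM : M ≤ x a)
    (hg_nonneg : ∀ᵐ s, s ∈ Icc a b → x s < M → 0 ≤ g s) : M ≤ x b := by
  by_contra! hb
  have hclosed : IsClosed (Icc a b ∩ x ⁻¹' Ici M) :=
    hx.preimage_isClosed_of_isClosed isClosed_Icc isClosed_Ici
  obtain ⟨τ, ⟨hτ, hMτ⟩, hτ_max⟩ :=
    (isCompact_Icc.of_isClosed_subset hclosed inter_subset_left).exists_isGreatest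
      ⟨a, ⟨left_mem_Icc.2 hab, hM⟩⟩
  have h_below : ∀ s ∈ Ioc τ b, x s < M := fun s hs => by
    by_contra! hMs
    exact (hτ_max ⟨⟨hτ.1.trans hs.1.le, hs.2⟩, hMs⟩).not_gt hs.1
  have hg_τ : IntervalIntegrable g volume a τ :=
    hg.mono_set (uIcc_subset_uIcc_left (Icc_subset_uIcc hτ))
  have h_incr : x b - x τ = ∫ u in τ..b, g u := by
    rw [heq b (right_mem_Icc.2 hab), heq τ hτ, add_sub_add_left_eq_sub,
      intervalIntegral.integral_interval_sub_left hg hg_τ]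
  have h_nonneg : 0 ≤ ∫ u in τ..b, g u := by
    rw [intervalIntegral.integral_of_le hτ.2]
    refine setIntegral_nonneg_of_ae_restrict ?_
    rw [Filter.EventuallyLE, ae_restrict_iff' measurableSet_Ioc]
    filter_upwards [hg_nonneg] with s hs hmem
    exact hs ⟨hτ.1.trans hmem.1.le, hmem.2⟩ (h_below s hmem)
  linarith [show M ≤ x τ from hMτ]

lemma inv_combination_nonneg_of_lt {α β c d lam mu z₀ u v : ℝ} (hα : 0 ≤ α)
    (hlam : 0 < lam) (hmu : 0 < mu) (hc : 0 < c) (hd : 0 ≤ d) (hcd : 0 ≤ α * d + β * c)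
    (hz₀ : 0 ≤ z₀) (hu : 0 < u) (hu_lt : u < c * z₀ / (lam * c + mu * d))
    (hz : z₀ ≤ lam * u + mu * v) : 0 ≤ α * (1 / u) + β * (1 / v) := by
  have hL : 0 < lam * c + mu * d := by positivity
  rw [lt_div_iff₀ hL] at hu_lt
  have hv_gt : d * z₀ < v * (lam * c + mu * d) := by nlinarith
  have hv : 0 < v := pos_of_mul_pos_left (hv_gt.trans_le' (by positivity)) hL.le
  have hnum : 0 ≤ α * v + β * u := by
    rcases le_or_gt 0 β with hβ | hβ
    · positivity
    · nlinarith [mul_le_mul_of_nonneg_left hv_gt.le hα]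
  calc (0 : ℝ) ≤ (α * v + β * u) / (u * v) := by positivity
    _ = α * (1 / u) + β * (1 / v) := by field_simp

namespace IsSolution

variable {α β γ δ x₀ y₀ : ℝ} {x y : ℝ → ℝ}

lemma swap (h : IsSolution α β γ δ x₀ y₀ x y) : IsSolution δ γ β α y₀ x₀ y x := by
  obtain ⟨hxc, hyc, hnn, hx0, hy0, heqs⟩ := h
  refine ⟨hyc, hxc, fun t ht => (hnn t ht).symm, hy0, hx0, fun t ht => ?_⟩
  obtain ⟨hNx, hNy, hIx, hIy, hEx, hEy⟩ := heqs t ht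
  exact ⟨hNy, hNx, hIy, hIx, by rw [hEy]; ring, by rw [hEx]; ring⟩

lemma integral_inv_fst_nonneg (h : IsSolution α β γ δ x₀ y₀ x y) {t : ℝ} (ht : 0 ≤ t) :
    0 ≤ ∫ s in (0:ℝ)..t, 1 / x s :=
  intervalIntegral.integral_nonneg ht fun s hs => one_div_nonneg.2 (h.2.2.1 s hs.1).1

lemma initial_combination_le (h : IsSolution α β γ δ x₀ y₀ x y) {lam mu : ℝ}
    (h1 : 0 ≤ lam * α + mu * γ) (h2 : 0 ≤ lam * β + mu * δ) {t : ℝ} (ht : 0 ≤ t) :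
    lam * x₀ + mu * y₀ ≤ lam * x t + mu * y t := by
  obtain ⟨-, -, -, -, hEx, hEy⟩ := h.2.2.2.2.2 t ht
  rw [hEx, hEy]
  nlinarith [mul_nonneg h1 (h.integral_inv_fst_nonneg ht),
    mul_nonneg h2 (h.swap.integral_inv_fst_nonneg ht)]

lemma fst_eq_add_integral (h : IsSolution α β γ δ x₀ y₀ x y) {t : ℝ} (ht : 0 ≤ t) :
    x t = x 0 + ∫ s in (0:ℝ)..t, (α * (1 / x s) + β * (1 / y s)) := by
  obtain ⟨-, -, hIx, hIy, hEx, -⟩ := h.2.2.2.2.2 t ht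
  rw [intervalIntegral.integral_add (hIx.const_mul α) (hIy.const_mul β),
    intervalIntegral.integral_const_mul, intervalIntegral.integral_const_mul, hEx, h.2.2.2.1]
  ring

lemma ae_fst_ne_zero (h : IsSolution α β γ δ x₀ y₀ x y) {t : ℝ} (ht : 0 ≤ t) :
    ∀ᵐ s, s ∈ Icc 0 t → x s ≠ 0 := by
  rw [ae_iff]
  simpa [and_assoc] using (h.2.2.2.2.2 t ht).1

theorem min_le_fst (h : IsSolution α β γ δ x₀ y₀ x y) {lam mu c d : ℝ} (hα : 0 ≤ α)
    (hlam : 0 < lam) (hmu : 0 < mu) (hc : 0 < c) (hd : 0 ≤ d) (hcd : 0 ≤ α * d + β * c)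
    (h1 : 0 ≤ lam * α + mu * γ) (h2 : 0 ≤ lam * β + mu * δ) {t : ℝ} (ht : 0 ≤ t) :
    min x₀ (c * (lam * x₀ + mu * y₀) / (lam * c + mu * d)) ≤ x t := by
  have hnn := h.2.2.1
  have hx0 : x 0 = x₀ := h.2.2.2.1
  have hz₀ : 0 ≤ lam * x₀ + mu * y₀ := by
    obtain ⟨hx₀, hy₀⟩ := hnn 0 le_rfl
    rw [← hx0, ← h.2.2.2.2.1]
    positivity
  obtain ⟨-, -, hIx, hIy, -⟩ := h.2.2.2.2.2 t ht
  refine le_of_eq_add_integral_of_nonneg_below ht (h.1.mono Icc_subset_Ici_self)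
    ((hIx.const_mul α).add (hIy.const_mul β)) (fun s hs => h.fst_eq_add_integral hs.1)
    (hx0 ▸ min_le_left _ _) ?_
  filter_upwards [h.ae_fst_ne_zero ht] with s hs_ne hs hs_lt
  exact inv_combination_nonneg_of_lt hα hlam hmu hc hd hcd hz₀
    ((hnn s hs.1).1.lt_of_ne' (hs_ne hs)) (hs_lt.trans_le (min_le_right _ _))
    (h.initial_combination_le h1 h2 hs.1)

end IsSolution

lemma constants_pos_and_cross_nonneg {α β γ δ θ c d : ℝ} (hα : 0 < α) (hδ : 0 < δ)
    (hθ : θ ^ 2 = (β - γ) ^ 2 + 4 * α * δ) (hθ_nonneg : 0 ≤ θ) (hsum : 0 < β + γ + θ)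
    (hc : c = Real.sqrt (2 * α + β / δ * (β - γ + θ)))
    (hd : d = Real.sqrt (2 * δ + γ / α * (γ - β + θ))) :
    0 < c ∧ 0 < d ∧ 0 ≤ α * d + β * c := by
  obtain ⟨hf, he⟩ : -θ < β - γ ∧ β - γ < θ :=
    abs_lt.1 (abs_lt_of_sq_lt_sq (by nlinarith [mul_pos hα hδ]) hθ_nonneg)
  replace hf : 0 < β - γ + θ := by linarith
  replace he : 0 < γ - β + θ := by linarith
  have hc_arg : 2 * α + β / δ * (β - γ + θ) = (β - γ + θ) * (β + γ + θ) / (2 * δ) := by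
    field_simp
    linear_combination -hθ
  have hd_arg : 2 * δ + γ / α * (γ - β + θ) = (γ - β + θ) * (β + γ + θ) / (2 * α) := by
    field_simp
    linear_combination -hθ
  rw [hc_arg] at hc
  rw [hd_arg] at hd
  have hc_pos : 0 < c := hc ▸ Real.sqrt_pos.2 (by positivity)
  have hd_pos : 0 < d := hd ▸ Real.sqrt_pos.2 (by positivity)
  have hc_sq : c ^ 2 = (β - γ + θ) * (β + γ + θ) / (2 * δ) := by
    rw [hc, Real.sq_sqrt (by positivity)]
  have hd_sq : d ^ 2 = (γ - β + θ) * (β + γ + θ) / (2 * α) := by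
    rw [hd, Real.sq_sqrt (by positivity)]
  have hd_eq : 2 * α * d = (γ - β + θ) * c := by
    refine (sq_eq_sq₀ (by positivity) (by positivity)).1 ?_
    rw [mul_pow, mul_pow, mul_pow, hc_sq, hd_sq]
    field_simp
    linear_combination -hθ
  exact ⟨hc_pos, hd_pos, by nlinarith⟩

lemma add_add_sqrt_discr_pos {α β γ δ : ℝ} (hα : 0 < α) (hδ : 0 < δ)
    (hH : max β γ ≥ 0 ∨ β * γ < α * δ) :
    0 < β + γ + Real.sqrt ((β - γ) ^ 2 + 4 * α * δ) := by
  have hαδ := mul_pos hα hδ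
  have hθ := Real.sq_sqrt (by positivity : 0 ≤ (β - γ) ^ 2 + 4 * α * δ)
  have hθ_pos := Real.sqrt_pos.2 (by positivity : 0 < (β - γ) ^ 2 + 4 * α * δ)
  by_contra! hle
  have hprod : α * δ ≤ β * γ := by nlinarith
  rcases hH with hmax | hlt
  · rcases le_max_iff.1 hmax with hβ | hγ <;> nlinarith
  · linarith

theorem lower_bounds_general (α β γ δ : ℝ) (hα : 0 < α) (hδ : 0 < δ)
    (hH : max β γ ≥ 0 ∨ β * γ < α * δ)
    (lam mu : ℝ) (hlam : 0 < lam) (hmu : 0 < mu)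
    (h1 : 0 < lam * α + mu * γ) (h2 : 0 < lam * β + mu * δ)
    (c d : ℝ)
    (hc : c = Real.sqrt (2 * α + β / δ * (β - γ + Real.sqrt ((β - γ) ^ 2 + 4 * α * δ))))
    (hd : d = Real.sqrt (2 * δ + γ / α * (γ - β + Real.sqrt ((β - γ) ^ 2 + 4 * α * δ))))
    (x₀ y₀ : ℝ)
    (x y : ℝ → ℝ) (hsol : IsSolution α β γ δ x₀ y₀ x y) :
    ∀ t > (0:ℝ),
      min x₀ (c * (lam * x₀ + mu * y₀) / (lam * c + mu * d)) ≤ x t ∧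
      min y₀ (d * (lam * x₀ + mu * y₀) / (lam * c + mu * d)) ≤ y t := by
  intro t ht
  have hsum := add_add_sqrt_discr_pos hα hδ hH
  set θ := Real.sqrt ((β - γ) ^ 2 + 4 * α * δ)
  have hθ : θ ^ 2 = (β - γ) ^ 2 + 4 * α * δ := Real.sq_sqrt (by positivity)
  obtain ⟨hc_pos, hd_pos, hcd⟩ :=
    constants_pos_and_cross_nonneg hα hδ hθ (Real.sqrt_nonneg _) hsum hc hd
  obtain ⟨-, -, hdc⟩ := constants_pos_and_cross_nonneg hδ hα (by linear_combination hθ)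
    (Real.sqrt_nonneg _) (by linarith) hd hc
  refine ⟨hsol.min_le_fst hα.le hlam hmu hc_pos hd_pos.le hcd h1.le h2.le ht.le, ?_⟩
  convert hsol.swap.min_le_fst hδ.le hmu hlam hd_pos hc_pos.le hdc (by linarith) (by linarith)
    ht.le using 2
  ring

/-- Under (H), with `λ, μ > 0` such that `λα + μγ > 0` and `λβ + μδ > 0`,
any solution starting at `(x₀, y₀) ∈ S°` satisfies for all `t > 0`:
`x(t) ≥ min (x₀, c (λx₀ + μy₀) / (λc + μd))` and
`y(t) ≥ min (y₀, d (λx₀ + μy₀) / (λc + μd))`. -/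
theorem lower_bounds (α β γ δ : ℝ) (hα : 0 < α) (hδ : 0 < δ)
    (hH : max β γ ≥ 0 ∨ β * γ < α * δ)
    (lam mu : ℝ) (hlam : 0 < lam) (hmu : 0 < mu)
    (h1 : 0 < lam * α + mu * γ) (h2 : 0 < lam * β + mu * δ)
    (c d : ℝ)
    (hc : c = Real.sqrt (2 * α + β / δ * (β - γ + Real.sqrt ((β - γ) ^ 2 + 4 * α * δ))))
    (hd : d = Real.sqrt (2 * δ + γ / α * (γ - β + Real.sqrt ((β - γ) ^ 2 + 4 * α * δ))))
    (x₀ y₀ : ℝ) (hx₀ : 0 ≤ x₀) (hy₀ : 0 ≤ y₀) (hne : ¬(x₀ = 0 ∧ y₀ = 0))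
    (x y : ℝ → ℝ) (hsol : IsSolution α β γ δ x₀ y₀ x y) :
    ∀ t > (0:ℝ),
      min x₀ (c * (lam * x₀ + mu * y₀) / (lam * c + mu * d)) ≤ x t ∧
      min y₀ (d * (lam * x₀ + mu * y₀) / (lam * c + mu * d)) ≤ y t :=
  lower_bounds_general α β γ δ hα hδ hH lam mu hlam hmu h1 h2 c d hc hd x₀ y₀ x y hsol
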